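/- arXiv:1405.5310 — 5 statements merged into one kernel-verified Lean document; each statement's English description precedes it below -/
import Mathlib

section
/- Let p, q be coprime positive integers and f(X) = q·X^(p+q) − (p+q)·X^q + p over ℂ. Then every root of f other than 1 is a simple root of f. -/
/-!
Write `f = q X^(p+q) - (p+q) X^q + p`. Since `X f' = q (p+q) X^q (X^p - 1)` and `f(0) = p ≠ 0`,
a multiple root `z` of `f` satisfies `z^p = 1`, and then `0 = f(z) = p (1 - z^q)` gives `z^q = 1`.
As `gcd(p, q) = 1`, `z = 1`.
-/

open Polynomial

theorem Polynomial.rootMultiplicity_eq_one_of_isRoot_of_not_isRoot_derivative {R : Type*}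
    [CommRing R] {f : R[X]} {t : R} (hf : f.IsRoot t) (hf' : ¬ (derivative f).IsRoot t) :
    f.rootMultiplicity t = 1 := by
  have hf0 : f ≠ 0 := by
    rintro rfl
    simp at hf'
  have hpos := (rootMultiplicity_pos hf0).2 hf
  have hle := (one_lt_rootMultiplicity_iff_isRoot hf0).not.2 fun h => hf' h.2
  omega

/-- `f(1) = f'(1) = 0`, so `1` is always a multiple root. -/
noncomputable def balancedTrinomial (R : Type*) [CommRing R] (p q : ℕ) : R[X] :=
  C (q : R) * X ^ (p + q) - C ((p : R) + q) * X ^ q + C (p : R)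

section CommRing

variable {R : Type*} [CommRing R] {p q : ℕ}

theorem X_mul_derivative_balancedTrinomial :
    X * derivative (balancedTrinomial R p q) = C ((q : R) * (p + q)) * X ^ q * (X ^ p - 1) := by
  cases q with
  | zero => simp [balancedTrinomial]
  | succ k =>
    simp only [balancedTrinomial, derivative_add, derivative_sub, derivative_C_mul_X_pow,
      derivative_C, Nat.add_sub_cancel, ← Nat.add_assoc]
    simp only [map_mul, map_add, map_natCast]
    push_cast
    ring

theorem eval_zero_balancedTrinomial (hq : q ≠ 0) : (balancedTrinomial R p q).eval 0 = p := by
  simp [balancedTrinomial, hq]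

end CommRing

section Field

variable {K : Type*} [Field K] [CharZero K] {p q : ℕ} {z : K}

theorem pow_eq_one_of_isRoot_derivative_balancedTrinomial (hq : q ≠ 0) (hz : z ≠ 0)
    (h : (derivative (balancedTrinomial K p q)).IsRoot z) : z ^ p = 1 := by
  have := congrArg (eval z) (X_mul_derivative_balancedTrinomial (R := K) (p := p) (q := q))
  simp only [eval_mul, eval_X, h.eq_zero, mul_zero, eval_C, eval_pow, eval_sub, eval_one] at this
  simpa [hq, hz, sub_eq_zero, ← Nat.cast_add] using this.symm

theorem pow_eq_one_of_isRoot_balancedTrinomial (hp : p ≠ 0) (hzp : z ^ p = 1)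
    (h : (balancedTrinomial K p q).IsRoot z) : z ^ q = 1 := by
  have h := h.eq_zero
  simp only [balancedTrinomial, eval_add, eval_sub, eval_mul, eval_C, eval_pow, eval_X, pow_add,
    hzp] at h
  have h : (p : K) * (z ^ q - 1) = 0 := by linear_combination -h
  simpa [hp, sub_eq_zero] using h

theorem eq_one_of_isRoot_balancedTrinomial_of_isRoot_derivative (hp : p ≠ 0) (hq : q ≠ 0)
    (hpq : p.Coprime q) (h : (balancedTrinomial K p q).IsRoot z)
    (h' : (derivative (balancedTrinomial K p q)).IsRoot z) : z = 1 := by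
  have hz : z ≠ 0 := by
    rintro rfl
    simp [IsRoot, eval_zero_balancedTrinomial hq, hp] at h
  have hzp := pow_eq_one_of_isRoot_derivative_balancedTrinomial hq hz h'
  have hzq := pow_eq_one_of_isRoot_balancedTrinomial hp hzp h
  simpa [hpq.gcd_eq_one] using pow_gcd_eq_one.2 ⟨hzp, hzq⟩

end Field

theorem stmt_1 (p q : ℕ) (hp : 1 ≤ p) (hq : 1 ≤ q) (hpq : Nat.Coprime p q)
    (z : ℂ)
    (hz : IsRoot (C (q : ℂ) * X ^ (p + q) - C ((p : ℂ) + q) * X ^ q + C (p : ℂ)) z)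
    (hz1 : z ≠ 1) :
    rootMultiplicity z
      (C (q : ℂ) * X ^ (p + q) - C ((p : ℂ) + q) * X ^ q + C (p : ℂ)) = 1 :=
  rootMultiplicity_eq_one_of_isRoot_of_not_isRoot_derivative hz fun hz' =>
    hz1 (eq_one_of_isRoot_balancedTrinomial_of_isRoot_derivative (K := ℂ) (by omega) (by omega)
      hpq hz hz')
end

section
/- Let p, q be coprime positive integers and f(X) = q·X^(p+q) − (p+q)·X^q + p. Then f has no root of absolute value 1 other than X = 1. Equivalently, if z ∈ ℂ, |z| = 1 and f(z) = 0, then z = 1. -/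
/-!
On the unit circle the equation reads `(p + q) z ^ q = q z ^ (p + q) + p`. The left side has norm
`p + q`, so the triangle inequality on the right is an equality; by strict convexity of `ℂ` this
forces `z ^ (p + q) = 1`, hence `z ^ q = 1` and `z ^ p = 1`, and coprimality gives `z = 1`.
-/

theorem eq_of_norm_smul_add_smul_eq {E : Type*} [NormedAddCommGroup E] [NormedSpace ℝ E]
    [StrictConvexSpace ℝ E] {x y : E} {a b : ℝ} (ha : 0 < a) (hb : 0 < b) (hxy : ‖x‖ = ‖y‖)
    (h : ‖a • x + b • y‖ = (a + b) * ‖x‖) : x = y := by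
  have hray : SameRay ℝ (a • x) (b • y) := by
    rw [sameRay_iff_norm_add, h, norm_smul, norm_smul, hxy, Real.norm_of_nonneg ha.le,
      Real.norm_of_nonneg hb.le, add_mul]
  have hxy_ray : SameRay ℝ x y := by
    simpa [smul_smul, ha.ne', hb.ne'] using
      (hray.pos_smul_left (inv_pos.2 ha)).pos_smul_right (inv_pos.2 hb)
  exact hxy_ray.eq_of_norm_eq hxy

theorem stmt_2 (p q : ℕ) (hp : 1 ≤ p) (hq : 1 ≤ q) (hpq : Nat.Coprime p q)
    (z : ℂ) (hz : ‖z‖ = 1)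
    (hroot : (q : ℂ) * z ^ (p + q) - ((p : ℂ) + q) * z ^ q + p = 0) :
    z = 1 := by
  have hnorm : ∀ n : ℕ, ‖z ^ n‖ = 1 := fun n => by rw [norm_pow, hz, one_pow]
  have hp_pos : (0 : ℝ) < p := by exact_mod_cast hp
  have hq_pos : (0 : ℝ) < q := by exact_mod_cast hq
  have hshift : ((p : ℂ) + q) * z ^ q = (q : ℝ) • z ^ (p + q) + (p : ℝ) • (1 : ℂ) := by
    simp only [Complex.real_smul, Complex.ofReal_natCast]
    linear_combination -hroot
  have hw : z ^ (p + q) = 1 := by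
    refine eq_of_norm_smul_add_smul_eq hq_pos hp_pos (by rw [hnorm, norm_one]) ?_
    rw [← hshift, norm_mul, hnorm, hnorm]
    norm_cast
    ring
  have hzq : z ^ q = 1 := by
    have hne : ((p : ℂ) + q) ≠ 0 := by exact_mod_cast (add_pos hp_pos hq_pos).ne'
    refine mul_left_cancel₀ hne ?_
    rw [hshift, hw]
    simp [add_comm]
  have hzp : z ^ p = 1 := by rwa [pow_add, hzq, mul_one] at hw
  simpa [hpq] using pow_gcd_eq_one.2 ⟨hzp, hzq⟩
end

section
/- Let p, q ≥ 1 be coprime integers with p, q ≥ 2. Define ev_c : {0,…,p+q−1} → {0,…,q−1} × {0,…,p−1} by ev_c(k) = (ev_in(k) mod q, ev_out(k) mod p), where ev_in(k) = ⌈qk/(p+q) + 1/2⌉ and ev_out(k) = k − ev_in(k). Then ev_c is injective. -/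
/-!
Write `n = p + q`, `Δk = k₂ - k₁` and `Δc = ev_in k₂ - ev_in k₁`. Since ceilings move by less than
one, `|Δc n - q Δk| < n`. If both residues agree then `q ∣ Δc` and `p ∣ Δk - Δc`, which make
`Δc n - q Δk = Δc p + q (Δc - Δk)` a multiple of `pq ≥ n`, hence zero. Then `Δk = (Δc / q) n` is a
multiple of `n` of absolute value `< n`, so `Δk = 0`.
-/

theorem abs_sub_sub_ceil_sub_ceil_lt_one {α : Type*} [CommRing α] [LinearOrder α]
    [IsStrictOrderedRing α] [FloorRing α] (x y : α) :
    |(⌈x⌉ - ⌈y⌉ : α) - (x - y)| < 1 := by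
  rw [abs_lt]
  constructor <;>
    linarith [Int.le_ceil x, Int.le_ceil y, Int.ceil_lt_add_one x, Int.ceil_lt_add_one y]

theorem abs_ceil_sub_ceil_mul_sub_lt {α : Type*} [Field α] [LinearOrder α]
    [IsStrictOrderedRing α] [FloorRing α] (a n k₁ k₂ t : α) (hn : 0 < n) :
    |(⌈a * k₂ / n + t⌉ - ⌈a * k₁ / n + t⌉ : α) * n - a * (k₂ - k₁)| < n := by
  have hscale : (⌈a * k₂ / n + t⌉ - ⌈a * k₁ / n + t⌉ : α) * n - a * (k₂ - k₁) =
      ((⌈a * k₂ / n + t⌉ - ⌈a * k₁ / n + t⌉ : α) - ((a * k₂ / n + t) - (a * k₁ / n + t))) * n := by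
    field_simp
    ring
  rw [hscale, abs_mul, abs_of_pos hn]
  calc _ < 1 * n := mul_lt_mul_of_pos_right (abs_sub_sub_ceil_sub_ceil_lt_one _ _) hn
    _ = n := one_mul n

theorem eq_zero_of_dvd_of_dvd_sub_of_abs_lt {p q Δc Δk : ℤ} (hp : 2 ≤ p) (hq : 2 ≤ q)
    (hc : q ∣ Δc) (hk : p ∣ Δk - Δc) (hest : |Δc * (p + q) - q * Δk| < p + q)
    (hΔk : |Δk| < p + q) : Δk = 0 := by
  obtain ⟨a, rfl⟩ := hc
  have hdvd : p * q ∣ q * a * (p + q) - q * Δk := by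
    have hsplit : q * a * (p + q) - q * Δk = p * q * a - q * (Δk - q * a) := by ring
    rw [hsplit]
    exact dvd_sub (dvd_mul_right _ _) (by rw [mul_comm p]; exact mul_dvd_mul_left q hk)
  have hsum_le : p + q ≤ p * q := by nlinarith
  have hzero := Int.eq_zero_of_abs_lt_dvd hdvd (hest.trans_le hsum_le)
  have hΔk_eq : Δk = (p + q) * a := by
    have : q * (Δk - (p + q) * a) = 0 := by linarith
    rcases mul_eq_zero.mp this with h | h <;> linarith
  exact Int.eq_zero_of_abs_lt_dvd (hΔk_eq ▸ dvd_mul_right _ _) hΔk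

theorem stmt_12_general (p q : ℕ) (hp : 2 ≤ p) (hq : 2 ≤ q) :
    ∀ k₁ k₂ : ℤ, 0 ≤ k₁ → k₁ ≤ (p : ℤ) + q - 1 → 0 ≤ k₂ → k₂ ≤ (p : ℤ) + q - 1 →
      (⌈(q : ℚ) * k₁ / ((p : ℚ) + q) + 1 / 2⌉ % (q : ℤ) =
        ⌈(q : ℚ) * k₂ / ((p : ℚ) + q) + 1 / 2⌉ % (q : ℤ)) →
      ((k₁ - ⌈(q : ℚ) * k₁ / ((p : ℚ) + q) + 1 / 2⌉) % (p : ℤ) =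
        (k₂ - ⌈(q : ℚ) * k₂ / ((p : ℚ) + q) + 1 / 2⌉) % (p : ℤ)) →
      k₁ = k₂ := by
  intro k₁ k₂ h₁ h₁' h₂ h₂' hin hout
  have hest : |(⌈(q : ℚ) * k₂ / ((p : ℚ) + q) + 1 / 2⌉ - ⌈(q : ℚ) * k₁ / ((p : ℚ) + q) + 1 / 2⌉)
      * ((p : ℤ) + q) - q * (k₂ - k₁)| < (p : ℤ) + q := by
    exact_mod_cast abs_ceil_sub_ceil_mul_sub_lt (q : ℚ) ((p : ℚ) + q) k₁ k₂ (1 / 2) (by positivity)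
  have hΔk := eq_zero_of_dvd_of_dvd_sub_of_abs_lt (by exact_mod_cast hp) (by exact_mod_cast hq)
    (Int.ModEq.dvd hin) (by convert Int.ModEq.dvd hout using 1; ring) hest
    (abs_lt.mpr ⟨by omega, by omega⟩)
  omega

theorem stmt_12 (p q : ℕ) (hp : 2 ≤ p) (hq : 2 ≤ q) (hpq : Nat.Coprime p q) :
    ∀ k₁ k₂ : ℤ, 0 ≤ k₁ → k₁ ≤ (p : ℤ) + q - 1 → 0 ≤ k₂ → k₂ ≤ (p : ℤ) + q - 1 →
      (⌈(q : ℚ) * k₁ / ((p : ℚ) + q) + 1 / 2⌉ % (q : ℤ) =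
        ⌈(q : ℚ) * k₂ / ((p : ℚ) + q) + 1 / 2⌉ % (q : ℤ)) →
      ((k₁ - ⌈(q : ℚ) * k₁ / ((p : ℚ) + q) + 1 / 2⌉) % (p : ℤ) =
        (k₂ - ⌈(q : ℚ) * k₂ / ((p : ℚ) + q) + 1 / 2⌉) % (p : ℤ)) →
      k₁ = k₂ :=
  stmt_12_general p q hp hq
end

section
/- Let p > q ≥ 1 be coprime integers. For each n ∈ {0, …, p−1}, the fiber of the map k ↦ ev_out(k) mod p over n, restricted to k ∈ {0,…,p+q−1}, has at most 2 elements, where ev_out(k) = ⌊pk/(p+q) − 1/2⌋. -/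
/-! Since `p ≥ q`, the slope `p / (p + q)` of `k ↦ p k / (p + q) - 1/2` is at least `1/2`, so
`ev_out` strictly increases over any two steps. On `0 ≤ k ≤ p + q - 1` it takes values in
`[-1, p - 1)`, a window of length less than `p`, so values two or more steps apart are distinct
modulo `p`. Hence every fiber consists of at most two consecutive integers. -/

def evOut (p q : ℕ) (k : ℤ) : ℤ := ⌊(p : ℚ) * (k : ℚ) / ((p : ℚ) + q) - 1 / 2⌋

theorem Finset.card_le_two_of_forall_le_add_one {s : Finset ℤ}
    (h : ∀ a ∈ s, ∀ b ∈ s, a ≤ b → b ≤ a + 1) : s.card ≤ 2 := by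
  rcases s.eq_empty_or_nonempty with rfl | hs
  · simp
  have hsub : s ⊆ Finset.Icc (s.min' hs) (s.min' hs + 1) := fun k hk =>
    Finset.mem_Icc.2 ⟨s.min'_le k hk, h _ (s.min'_mem hs) k hk (s.min'_le k hk)⟩
  calc s.card ≤ (Finset.Icc (s.min' hs) (s.min' hs + 1)).card := Finset.card_le_card hsub
    _ = 2 := by rw [Int.card_Icc]; omega

section

variable {p q : ℕ}

theorem evOut_lt_evOut (hp : 0 < p) (hqp : q ≤ p) {a b : ℤ} (hab : a + 2 ≤ b) :
    evOut p q a < evOut p q b := by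
  have hpq : (0 : ℚ) < p + q := by positivity
  have hstep : (1 : ℚ) ≤ (p : ℚ) * b / (p + q) - p * a / (p + q) := by
    rw [← sub_div, le_div_iff₀ hpq]
    have : (2 : ℚ) ≤ b - a := by exact_mod_cast (by omega : (2 : ℤ) ≤ b - a)
    have : (q : ℚ) ≤ p := by exact_mod_cast hqp
    nlinarith
  rw [← Int.add_one_le_iff, evOut, evOut, Int.le_floor]
  push_cast
  linarith [Int.floor_le ((p : ℚ) * a / (p + q) - 1 / 2)]

theorem neg_one_le_evOut {k : ℤ} (hk : 0 ≤ k) : -1 ≤ evOut p q k := by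
  refine Int.le_floor.2 ?_
  have : (0 : ℚ) ≤ p * k / (p + q) := by
    have : (0 : ℚ) ≤ k := by exact_mod_cast hk
    positivity
  push_cast
  linarith

theorem evOut_lt_sub_one (hqp : q < p) {k : ℤ} (hk : k ≤ p + q - 1) :
    evOut p q k < p - 1 := by
  refine Int.floor_lt.2 ?_
  have hpq : (0 : ℚ) < p + q := by exact_mod_cast (by omega : 0 < p + q)
  have hk' : (k : ℚ) ≤ p + q - 1 := by exact_mod_cast hk
  have : (q : ℚ) < p := by exact_mod_cast hqp
  have : (p : ℚ) * k / (p + q) < p - 1 / 2 := by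
    rw [div_lt_iff₀ hpq]
    nlinarith
  push_cast
  linarith

end

theorem stmt_14_general (p q : ℕ) (hpq : q < p) :
    ∀ n : ℤ,
      ((Finset.Icc (0 : ℤ) ((p : ℤ) + q - 1)).filter
        (fun k : ℤ =>
          ⌊(p : ℚ) * (k : ℚ) / ((p : ℚ) + q) - 1 / 2⌋ % (p : ℤ) = n)).card ≤ 2 := by
  intro n
  refine Finset.card_le_two_of_forall_le_add_one fun a ha b hb _ => ?_
  simp only [Finset.mem_filter, Finset.mem_Icc] at ha hb
  obtain ⟨⟨ha0, -⟩, hna⟩ := ha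
  obtain ⟨⟨-, hbp⟩, hnb⟩ := hb
  by_contra! hab
  have hlt := evOut_lt_evOut (q := q) (by omega) hpq.le (show a + 2 ≤ b by omega)
  have hlo := neg_one_le_evOut (p := p) (q := q) ha0
  have hhi := evOut_lt_sub_one hpq hbp
  have hdvd : (p : ℤ) ∣ evOut p q b - evOut p q a := Int.ModEq.dvd (hna.trans hnb.symm)
  have hzero := Int.eq_zero_of_dvd_of_nonneg_of_lt (by omega) (by omega) hdvd
  omega

theorem stmt_14 (p q : ℕ) (hq : 1 ≤ q) (hpq : q < p) (hcop : Nat.Coprime p q) :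
    ∀ n : ℤ,
      ((Finset.Icc (0 : ℤ) ((p : ℤ) + q - 1)).filter
        (fun k : ℤ =>
          ⌊(p : ℚ) * (k : ℚ) / ((p : ℚ) + q) - 1 / 2⌋ % (p : ℤ) = n)).card ≤ 2 :=
  stmt_14_general p q hpq
end

section
/- Let p, q ≥ 1 be coprime, and define on μ_{p+q} the relation ζ <_odd ζ' iff Re(e^{−εi}(ζ^p − ζ'^p)) < 0 for all sufficiently small ε > 0. Then <_odd is a strict total order on μ_{p+q}. -/
/-!
Since `Re(e^{-iε} w) = cos ε · Re w + sin ε · Im w`, this quantity is negative for all small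
`ε > 0` exactly when `w` is negative for the lexicographic order on `(Re w, Im w)`. Taking
`w = ζ^p - ζ'^p`, the relation `<_odd` is therefore the pullback of the lexicographic order on
`ℂ ≅ ℝ × ℝ` along `ζ ↦ ζ^p`, and this map is injective on `μ_{p+q}` because `gcd(p, p+q) = 1`.
-/

open Complex

/-- The "odd" order on roots of unity: `ζ <_odd ζ'` iff
`Re(e^{-iε}(ζ^p - ζ'^p)) < 0` for all sufficiently small `ε > 0`. -/
def oddLt (p : ℕ) (ζ ζ' : ℂ) : Prop :=
  ∃ ε₀ > (0 : ℝ), ∀ ε : ℝ, 0 < ε → ε < ε₀ →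
    (Complex.exp (-(ε : ℂ) * Complex.I) * (ζ ^ p - ζ' ^ p)).re < 0

open Filter Topology Set

theorem eq_of_pow_eq_pow_of_coprime {K : Type*} [CommGroupWithZero K] {m n : ℕ}
    (hmn : m.Coprime n) {x y : K} (hx : x ^ n = 1) (hy : y ^ n = 1) (h : x ^ m = y ^ m) :
    x = y := by
  rcases Nat.eq_zero_or_pos n with rfl | hn
  · rw [Nat.coprime_zero_right] at hmn
    simpa [hmn] using h
  have hy₀ : y ≠ 0 := by
    rintro rfl
    simp [hn.ne'] at hy
  rw [← div_eq_one_iff_eq hy₀, ← pow_eq_one_iff_of_coprime hmn, div_pow, div_pow, h, hx, hy,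
    div_self (pow_ne_zero _ hy₀), div_one]
  exact ⟨rfl, rfl⟩

theorem re_exp_neg_mul_I_mul (ε : ℝ) (w : ℂ) :
    (exp (-ε * I) * w).re = Real.cos ε * w.re + Real.sin ε * w.im := by
  rw [← ofReal_neg, mul_re, exp_ofReal_mul_I_re, exp_ofReal_mul_I_im, Real.cos_neg, Real.sin_neg]
  ring

theorem eventually_re_exp_neg_mul_I_mul_neg_iff (w : ℂ) :
    (∀ᶠ ε : ℝ in 𝓝[>] 0, (exp (-ε * I) * w).re < 0) ↔ w.re < 0 ∨ w.re = 0 ∧ w.im < 0 := by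
  have hcont : Continuous fun ε : ℝ ↦ (exp (-ε * I) * w).re := by fun_prop
  have hsin : ∀ᶠ ε : ℝ in 𝓝[>] 0, 0 < Real.sin ε :=
    eventually_of_mem (Ioo_mem_nhdsGT Real.pi_pos) fun ε hε ↦ Real.sin_pos_of_pos_of_lt_pi hε.1 hε.2
  constructor
  · intro h
    have hre : w.re ≤ 0 := by
      have hlim : Tendsto (fun ε : ℝ ↦ (exp (-ε * I) * w).re) (𝓝[>] 0) (𝓝 w.re) := by
        simpa using (hcont.tendsto 0).mono_left nhdsWithin_le_nhds
      exact le_of_tendsto hlim (h.mono fun _ ↦ le_of_lt)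
    refine hre.lt_or_eq.imp_right fun hre ↦ ⟨hre, ?_⟩
    obtain ⟨ε, hε, hsinε⟩ := (h.and hsin).exists
    rw [re_exp_neg_mul_I_mul, hre, mul_zero, zero_add] at hε
    exact neg_of_mul_neg_right hε hsinε.le
  · rintro (hre | ⟨hre, him⟩)
    · exact nhdsWithin_le_nhds <| hcont.continuousAt.eventually_lt_const (by simpa using hre)
    · filter_upwards [hsin] with ε hε
      rw [re_exp_neg_mul_I_mul, hre, mul_zero, zero_add]
      exact mul_neg_of_pos_of_neg hε him

theorem oddLt_iff_eventually (p : ℕ) (ζ ζ' : ℂ) :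
    oddLt p ζ ζ' ↔ ∀ᶠ ε : ℝ in 𝓝[>] 0, (exp (-ε * I) * (ζ ^ p - ζ' ^ p)).re < 0 := by
  simp only [oddLt, eventually_iff, mem_nhdsGT_iff_exists_Ioo_subset, subset_def, mem_Ioo,
    mem_ofPred_eq, mem_Ioi]
  exact ⟨fun ⟨ε₀, hε₀, h⟩ ↦ ⟨ε₀, hε₀, fun ε hε ↦ h ε hε.1 hε.2⟩,
    fun ⟨ε₀, hε₀, h⟩ ↦ ⟨ε₀, hε₀, fun ε h₀ h₁ ↦ h ε ⟨h₀, h₁⟩⟩⟩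

theorem oddLt_iff_toLex_lt (p : ℕ) (ζ ζ' : ℂ) :
    oddLt p ζ ζ' ↔ toLex (equivRealProd (ζ ^ p)) < toLex (equivRealProd (ζ' ^ p)) := by
  rw [oddLt_iff_eventually, eventually_re_exp_neg_mul_I_mul_neg_iff, Prod.Lex.toLex_lt_toLex]
  simp only [equivRealProd_apply, sub_re, sub_im, sub_neg, sub_eq_zero]

theorem stmt_18_general (p q : ℕ) (hpq : Nat.Coprime p q) :
    (∀ ζ : ℂ, ζ ^ (p + q) = 1 → ¬ oddLt p ζ ζ) ∧
    (∀ ζ ζ' ζ'' : ℂ, ζ ^ (p + q) = 1 → ζ' ^ (p + q) = 1 → ζ'' ^ (p + q) = 1 →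
      oddLt p ζ ζ' → oddLt p ζ' ζ'' → oddLt p ζ ζ'') ∧
    (∀ ζ ζ' : ℂ, ζ ^ (p + q) = 1 → ζ' ^ (p + q) = 1 → ζ ≠ ζ' →
      oddLt p ζ ζ' ∨ oddLt p ζ' ζ) := by
  simp only [oddLt_iff_toLex_lt]
  refine ⟨fun ζ _ ↦ lt_irrefl _, fun ζ ζ' ζ'' _ _ _ ↦ lt_trans, fun ζ ζ' hζ hζ' hne ↦ ?_⟩
  refine lt_or_gt_of_ne fun h ↦ hne ?_
  have hpow : ζ ^ p = ζ' ^ p := equivRealProd.injective (toLex.injective h)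
  exact eq_of_pow_eq_pow_of_coprime (Nat.coprime_self_add_right.mpr hpq) hζ hζ' hpow

theorem stmt_18 (p q : ℕ) (hp : 1 ≤ p) (hq : 1 ≤ q) (hpq : Nat.Coprime p q) :
    (∀ ζ : ℂ, ζ ^ (p + q) = 1 → ¬ oddLt p ζ ζ) ∧
    (∀ ζ ζ' ζ'' : ℂ, ζ ^ (p + q) = 1 → ζ' ^ (p + q) = 1 → ζ'' ^ (p + q) = 1 →
      oddLt p ζ ζ' → oddLt p ζ' ζ'' → oddLt p ζ ζ'') ∧
    (∀ ζ ζ' : ℂ, ζ ^ (p + q) = 1 → ζ' ^ (p + q) = 1 → ζ ≠ ζ' →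
      oddLt p ζ ζ' ∨ oddLt p ζ' ζ) :=
  stmt_18_general p q hpq
end
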